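/- arXiv:2110.01132 — 7 statements merged into one kernel-verified Lean document; each statement's English description precedes it below -/
import Mathlib

section
/- The Luroth map L : (0,1] → (0,1] defined by L(x) = N(x)·((N(x)+1)·x − 1), where N(x) = ⌊1/x⌋, preserves Lebesgue measure restricted to the interval (0,1]; that is, L is a measure-preserving transformation of ((0,1], Lebesgue measure). -/
open MeasureTheory

/-- The digit function `N(x) = ⌊1/x⌋` of the Luroth expansion. -/
noncomputable def lurothN (x : ℝ) : ℤ := ⌊1 / x⌋

/-- The Luroth map `L(x) = N(x)((N(x)+1)x - 1)`. -/
noncomputable def lurothL (x : ℝ) : ℝ :=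
  (lurothN x) * ((lurothN x + 1) * x - 1)

/-!
On `{x | N(x) = n + 1} = (1/(n+2), 1/(n+1)]` the map `L` is the affine bijection
`x ↦ (n+1)((n+2)x - 1)` onto `(0, 1]`, whose preimages scale Lebesgue measure by
`cₙ = 1/((n+1)(n+2))`. Summing over the branches, `|L⁻¹(t) ∩ (0,1]| = (∑ cₙ) |t ∩ (0,1]|`;
taking `t = (0, 1]` itself gives `∑ cₙ = 1`, so the telescoping series never has to be evaluated.
-/

open Set Function
open scoped ENNReal

theorem measurePreserving_restrict_of_uniform_branches {α ι : Type*} [MeasurableSpace α]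
    [Countable ι] {μ : Measure α} {S : Set α} {f : α → α} {g : ι → α → α} {c : ι → ℝ≥0∞}
    (hf : Measurable f) (hg : ∀ i, Measurable (g i)) (hS : MeasurableSet S) (hμS : μ S ≠ ∞)
    (hdisj : Pairwise (Disjoint on fun i ↦ g i ⁻¹' S)) (hcover : ⋃ i, g i ⁻¹' S = S)
    (hfg : ∀ i, EqOn f (g i) (g i ⁻¹' S))
    (hc : ∀ i t, MeasurableSet t → μ (g i ⁻¹' t) = c i * μ t) :
    MeasurePreserving f (μ.restrict S) (μ.restrict S) := by
  have hpreimage (t : Set α) : f ⁻¹' t ∩ S = ⋃ i, g i ⁻¹' (t ∩ S) := by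
    conv_lhs => rw [← hcover, inter_iUnion]
    refine iUnion_congr fun i ↦ ext fun x ↦ and_congr_left fun hx ↦ ?_
    rw [mem_preimage, hfg i hx]
  have hmeasure (t : Set α) (ht : MeasurableSet t) :
      μ (f ⁻¹' t ∩ S) = (∑' i, c i) * μ (t ∩ S) := by
    rw [hpreimage, measure_iUnion
      (hdisj.mono fun i j ↦ Disjoint.mono (preimage_mono inter_subset_right)
        (preimage_mono inter_subset_right)) fun i ↦ hg i (ht.inter hS)]
    simp_rw [hc _ _ (ht.inter hS), ENNReal.tsum_mul_right]
  have hsum : μ S = (∑' i, c i) * μ S := by simpa using hmeasure univ MeasurableSet.univ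
  refine ⟨hf, Measure.ext fun t ht ↦ ?_⟩
  rw [Measure.map_apply hf ht, Measure.restrict_apply ht, Measure.restrict_apply (hf ht),
    hmeasure t ht]
  rcases eq_or_ne (μ S) 0 with hμ0 | hμ0
  · simp [measure_mono_null inter_subset_right hμ0]
  · rw [(ENNReal.mul_eq_right hμ0 hμS).1 hsum.symm, one_mul]

theorem Real.volume_preimage_mul_add {a : ℝ} (ha : a ≠ 0) (b : ℝ) (s : Set ℝ) :
    volume ((fun x ↦ a * x + b) ⁻¹' s) = ENNReal.ofReal |a⁻¹| * volume s := by
  rw [show (fun x ↦ a * x + b) ⁻¹' s = (a * ·) ⁻¹' ((· + b) ⁻¹' s) from rfl,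
    Real.volume_preimage_mul_left ha, measure_preimage_add_right]

theorem measurable_lurothL : Measurable lurothL := by
  unfold lurothL lurothN
  fun_prop

theorem lurothN_eq_natCast_add_one_iff {x : ℝ} (hx : 0 < x) (n : ℕ) :
    lurothN x = n + 1 ↔ (n + 1) * x ≤ 1 ∧ 1 < (n + 2) * x := by
  rw [lurothN, Int.floor_eq_iff, le_div_iff₀ hx, div_lt_iff₀ hx]
  push_cast
  constructor <;> rintro ⟨h1, h2⟩ <;> constructor <;> linarith

theorem one_le_lurothN_iff {x : ℝ} (hx : 0 < x) : 1 ≤ lurothN x ↔ x ≤ 1 := by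
  rw [lurothN, Int.le_floor, Int.cast_one, le_div_iff₀ hx, one_mul]

/-- The branch of `lurothL` where `lurothN = n + 1` (branches are indexed from `0`). -/
noncomputable def lurothBranch (n : ℕ) (x : ℝ) : ℝ := (n + 1) * ((n + 2) * x - 1)

theorem preimage_lurothBranch_Ioc (n : ℕ) :
    lurothBranch n ⁻¹' Ioc 0 1 = {x | 0 < x ∧ lurothN x = n + 1} := by
  ext x
  simp only [mem_preimage, mem_Ioc, mem_ofPred_eq, lurothBranch]
  constructor
  · rintro ⟨hpos, hle⟩
    have h1 : 1 < (n + 2) * x := by nlinarith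
    have hx : 0 < x := by nlinarith
    exact ⟨hx, (lurothN_eq_natCast_add_one_iff hx n).2 ⟨by nlinarith, h1⟩⟩
  · rintro ⟨hx, hN⟩
    obtain ⟨h1, h2⟩ := (lurothN_eq_natCast_add_one_iff hx n).1 hN
    constructor <;> nlinarith

theorem iUnion_preimage_lurothBranch_Ioc : ⋃ n, lurothBranch n ⁻¹' Ioc 0 1 = Ioc 0 1 := by
  ext x
  simp only [preimage_lurothBranch_Ioc, mem_iUnion, mem_ofPred_eq, mem_Ioc]
  constructor
  · rintro ⟨n, hx, hN⟩
    exact ⟨hx, (one_le_lurothN_iff hx).1 (by omega)⟩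
  · rintro ⟨hx, hx1⟩
    have := (one_le_lurothN_iff hx).2 hx1
    exact ⟨(lurothN x - 1).toNat, hx, by omega⟩

theorem pairwise_disjoint_preimage_lurothBranch_Ioc :
    Pairwise (Disjoint on fun n ↦ lurothBranch n ⁻¹' Ioc 0 1) := by
  intro m n hmn
  simp only [onFun, preimage_lurothBranch_Ioc]
  exact disjoint_left.2 fun x ⟨_, hm⟩ ⟨_, hn⟩ ↦ hmn (by omega)

theorem lurothL_eqOn_lurothBranch (n : ℕ) :
    EqOn lurothL (lurothBranch n) (lurothBranch n ⁻¹' Ioc 0 1) := by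
  rw [preimage_lurothBranch_Ioc]
  rintro x ⟨_, hN⟩
  simp only [lurothL, lurothBranch, hN]
  push_cast
  ring

theorem volume_preimage_lurothBranch (n : ℕ) (s : Set ℝ) :
    volume (lurothBranch n ⁻¹' s) = ENNReal.ofReal (((n + 1) * (n + 2))⁻¹) * volume s := by
  have hbranch : lurothBranch n = fun x ↦ ((n + 1 : ℝ) * (n + 2)) * x + -(n + 1) := by
    funext x; simp only [lurothBranch]; ring
  rw [hbranch, Real.volume_preimage_mul_add (by positivity), abs_of_pos (by positivity)]

/-- The Luroth map preserves Lebesgue measure restricted to `(0, 1]`. -/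
theorem lurothL_measurePreserving :
    MeasurePreserving lurothL
      (volume.restrict (Set.Ioc (0 : ℝ) 1))
      (volume.restrict (Set.Ioc (0 : ℝ) 1)) :=
  measurePreserving_restrict_of_uniform_branches measurable_lurothL
    (fun _ ↦ by unfold lurothBranch; fun_prop) measurableSet_Ioc (by simp)
    pairwise_disjoint_preimage_lurothBranch_Ioc iUnion_preimage_lurothBranch_Ioc
    lurothL_eqOn_lurothBranch fun n t _ ↦ volume_preimage_lurothBranch n t
end

section
/- For all integers k ≥ 1 and m ≥ 1, the rational function Q_k(m) = (m−1)^{k−1} / (m^k (m+1)) admits the partial fraction expansion Q_k(m) = 2^{k−1} (1/m − 1/(m+1)) + Σ_{j=2}^{k} T(k−1, k−j) (−1)^{j+1} / m^j, where T(l, j) = Σ_{i=0}^{j} C(l, i) is the partial sum of binomial coefficients (Bernoulli triangle). -/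
/-!
With `n = k - 1` and `x = m`, multiplying out the denominators turns the expansion into
`(x - 1)^n = 2^n x^n + (x + 1) ∑_{i<n} (-1)^{n-i} T(n, i) x^i`. This is the substitution `z = -x`
in `(1 - z) ∑_{i<n} T(n, i) z^i = (1 + z)^n - 2^n z^n`, which holds because multiplying the
partial sums `T(n, ·)` by `1 - z` telescopes to `∑_{i<n} C(n, i) z^i - T(n, n - 1) z^n`, and
`T(n, n - 1) = 2^n - 1`.
-/

/-- The entries of Bernoulli's triangle: partial sums of binomial coefficients,
`T(l, j) = ∑_{i=0}^{j} C(l, i)`. -/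
def bernoulliTriangle (l j : ℕ) : ℕ := ∑ i ∈ Finset.range (j + 1), Nat.choose l i

open Finset

theorem one_sub_mul_sum_range_partialSum {R : Type*} [CommRing R] (a : ℕ → R) (z : R) (N : ℕ) :
    (1 - z) * ∑ i ∈ range N, (∑ j ∈ range (i + 1), a j) * z ^ i
      = ∑ i ∈ range (N + 1), a i * z ^ i - (∑ j ∈ range (N + 1), a j) * z ^ N := by
  induction N with
  | zero => simp
  | succ N ih =>
    rw [sum_range_succ, mul_add, ih, sum_range_succ _ (N + 1), sum_range_succ _ (N + 1)]
    ring

theorem one_sub_mul_sum_bernoulliTriangle {R : Type*} [CommRing R] (n : ℕ) (z : R) :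
    (1 - z) * ∑ i ∈ range n, (bernoulliTriangle n i : R) * z ^ i
      = (1 + z) ^ n - 2 ^ n * z ^ n := by
  have h := one_sub_mul_sum_range_partialSum (fun i => (n.choose i : R)) z n
  simp only [← Nat.cast_sum, Nat.sum_range_choose, Nat.cast_pow, Nat.cast_ofNat] at h
  rw [add_comm, add_pow]
  simpa [bernoulliTriangle, mul_comm] using h

theorem sum_Icc_two_eq_sum_range_reflect {M : Type*} [AddCommMonoid M] (f : ℕ → M) (n : ℕ) :
    ∑ j ∈ Icc 2 (n + 1), f j = ∑ i ∈ range n, f (n + 1 - i) := by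
  rw [range_eq_Ico, sum_Ico_reflect _ _ (by omega)]
  congr 1
  ext j
  simp only [mem_Icc, mem_Ico]
  omega

theorem sub_one_pow_div_pow_succ_mul_add_one {K : Type*} [Field K] (n : ℕ) {x : K}
    (hx : x ≠ 0) (hx1 : x + 1 ≠ 0) :
    (x - 1) ^ n / (x ^ (n + 1) * (x + 1))
      = 2 ^ n * (1 / x - 1 / (x + 1))
        + ∑ j ∈ Icc 2 (n + 1), (bernoulliTriangle n (n + 1 - j) : K) * (-1) ^ (j + 1) / x ^ j := by
  have hterm : ∀ i ∈ range n,
      (bernoulliTriangle n (n + 1 - (n + 1 - i)) : K) * (-1) ^ (n + 1 - i + 1) / x ^ (n + 1 - i)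
        = (-1) ^ n / x ^ (n + 1) * ((bernoulliTriangle n i : K) * (-x) ^ i) := by
    intro i hi
    have hin : i ≤ n + 1 := by have := mem_range.1 hi; omega
    rw [Nat.sub_sub_self hin, pow_succ, pow_sub₀ _ (by norm_num) hin, pow_sub₀ _ hx hin, neg_pow x]
    field_simp
    rw [pow_right_comm, neg_one_sq, one_pow, pow_succ]
    ring
  have hsum := one_sub_mul_sum_bernoulliTriangle n (-x)
  rw [sub_neg_eq_add, add_comm 1 x, ← sub_eq_add_neg, mul_comm] at hsum
  rw [sum_Icc_two_eq_sum_range_reflect, sum_congr rfl hterm, ← mul_sum, eq_div_of_mul_eq hx1 hsum,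
    neg_pow x, ← neg_sub x 1, neg_pow (x - 1)]
  field_simp
  rw [pow_right_comm, neg_one_sq, one_pow]
  ring

/-- Partial fraction expansion of `Q_k(m) = (m-1)^{k-1} / (m^k (m+1))`:
`Q_k(m) = 2^{k-1}(1/m - 1/(m+1)) + ∑_{j=2}^{k} T(k-1, k-j) (-1)^{j+1} / m^j`. -/
theorem Qk_partial_fraction (k m : ℕ) (hk : 1 ≤ k) (hm : 1 ≤ m) :
    ((m : ℝ) - 1) ^ (k - 1) / ((m : ℝ) ^ k * ((m : ℝ) + 1))
      = 2 ^ (k - 1) * (1 / (m : ℝ) - 1 / ((m : ℝ) + 1))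
        + ∑ j ∈ Finset.Icc 2 k,
            (bernoulliTriangle (k - 1) (k - j) : ℝ) * (-1) ^ (j + 1) / (m : ℝ) ^ j := by
  obtain ⟨n, rfl⟩ : ∃ n, k = n + 1 := ⟨k - 1, by omega⟩
  have hx : (m : ℝ) ≠ 0 := by positivity
  rw [Nat.add_sub_cancel]
  exact sub_one_pow_div_pow_succ_mul_add_one n hx (by positivity)
end

section
/- Let X_1, X_2, … be an IID sequence of random variables with the Luroth distribution, M_k = max(X_1, …, X_k), and let ρ_k be the probability that there exists exactly one index 1 ≤ i ≤ k with X_i = M_k. Then for every k ≥ 1, ρ_k = k (2^{k−1} + Σ_{j=2}^{k} T(k−1, k−j) ζ(j) (−1)^{j+1}), where ζ is the Riemann zeta function and T(l, j) = Σ_{i=0}^{j} C(l, i). -/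
/-!
The maximum of `X_1, …, X_k` is attained only at `i`, with value `n + 1`, exactly when
`X_i = n + 1` and `X_j ≤ n` for `j ≠ i` (the value `0` has probability `0`). By independence this
has probability `P(X = n + 1) P(X ≤ n)^(k-1) = (n/(n+1))^(k-1) / ((n+1)(n+2))`, so `ρ_k` is `k`
times the sum of these over `n`. Writing `y = 1/(n+1)`, the summand is `(1-y)^(k-1) y^2/(1+y)`,
and the identity `(z - 1) ∑_{m<l} T(l,m) z^(l-1-m) = (z+1)^l - 2^l` at `z = -y` splits it into
`2^(k-1)/((n+1)(n+2))`, whose sum telescopes to `2^(k-1)`, and a combination of powers `y^j`,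
whose sums are `ζ(j)`.
-/

open MeasureTheory ProbabilityTheory

open Finset Filter Topology

section BernoulliTriangle

variable {R : Type*} [CommRing R]

theorem sum_range_succ_mul_pow_sub (g : ℕ → R) (z : R) (n : ℕ) :
    ∑ m ∈ range (n + 1), g m * z ^ (n - m) = z * ∑ m ∈ range n, g m * z ^ (n - 1 - m) + g n := by
  rw [sum_range_succ, Nat.sub_self, pow_zero, mul_one, mul_sum]
  congr 1
  refine sum_congr rfl fun m hm => ?_
  rw [show n - m = n - 1 - m + 1 by have := mem_range.1 hm; omega, pow_succ]
  ring

theorem sub_one_mul_sum_partialSum_mul_pow (c : ℕ → R) (z : R) (n : ℕ) :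
    (z - 1) * ∑ m ∈ range n, (∑ i ∈ range (m + 1), c i) * z ^ (n - 1 - m)
      = z * ∑ m ∈ range n, c m * z ^ (n - 1 - m) - ∑ m ∈ range n, c m := by
  induction n with
  | zero => simp
  | succ n ih =>
    rw [Nat.add_sub_cancel, sum_range_succ_mul_pow_sub, sum_range_succ_mul_pow_sub,
      sum_range_succ c n]
    linear_combination z * ih

theorem sub_one_mul_sum_bernoulliTriangle (l : ℕ) (z : R) :
    (z - 1) * ∑ m ∈ range l, (bernoulliTriangle l m : R) * z ^ (l - 1 - m)
      = (z + 1) ^ l - 2 ^ l := by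
  have hpow : (z + 1) ^ l = z * ∑ m ∈ range l, (l.choose m : R) * z ^ (l - 1 - m) + 1 := by
    rw [add_comm, add_pow]
    simpa [mul_comm] using sum_range_succ_mul_pow_sub (fun m => (l.choose m : R)) z l
  have htwo : (2 : R) ^ l = ∑ m ∈ range l, (l.choose m : R) + 1 := by
    rw [← Nat.cast_ofNat, ← Nat.cast_pow, ← Nat.sum_range_choose, sum_range_succ]
    simp
  simp only [bernoulliTriangle, Nat.cast_sum]
  rw [sub_one_mul_sum_partialSum_mul_pow, hpow, htwo]
  ring

theorem sum_Icc_bernoulliTriangle_mul_pow (l : ℕ) (z : R) :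
    ∑ j ∈ Icc 2 (l + 1), (bernoulliTriangle l (l + 1 - j) : R) * z ^ j
      = z ^ 2 * ∑ m ∈ range l, (bernoulliTriangle l m : R) * z ^ (l - 1 - m) := by
  rw [mul_sum]
  refine sum_nbij' (fun j => l + 1 - j) (fun m => l + 1 - m) ?_ ?_ ?_ ?_ fun j hj => ?_
  · intro j hj; simp only [mem_Icc, mem_range] at hj ⊢; omega
  · intro m hm; simp only [mem_Icc, mem_range] at hm ⊢; omega
  · intro j hj; simp only [mem_Icc] at hj; omega
  · intro m hm; simp only [mem_range] at hm; omega
  · obtain ⟨hj2, hjl⟩ := mem_Icc.1 hj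
    rw [show l - 1 - (l + 1 - j) = j - 2 by omega, ← mul_assoc, mul_comm (z ^ 2), mul_assoc,
      ← pow_add, Nat.add_sub_cancel' hj2]

end BernoulliTriangle

theorem one_sub_pow_mul_sq_div_one_add {K : Type*} [Field K] (l : ℕ) {y : K} (hy : 1 + y ≠ 0) :
    (1 - y) ^ l * (y ^ 2 / (1 + y)) = 2 ^ l * (y ^ 2 / (1 + y))
      - ∑ j ∈ Icc 2 (l + 1), (bernoulliTriangle l (l + 1 - j) : K) * (-y) ^ j := by
  have h := sub_one_mul_sum_bernoulliTriangle l (-y)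
  rw [sum_Icc_bernoulliTriangle_mul_pow, neg_sq]
  field_simp
  linear_combination (-y ^ 2) * h

theorem hasSum_sub_succ_of_antitone {f : ℕ → ℝ} (hf : Antitone f) (hlim : Tendsto f atTop (𝓝 0)) :
    HasSum (fun n => f n - f (n + 1)) (f 0) := by
  rw [hasSum_iff_tendsto_nat_of_nonneg fun n => sub_nonneg.2 (hf n.le_succ)]
  simp_rw [sum_range_sub']
  simpa using tendsto_const_nhds.sub hlim

theorem hasSum_one_div_mul_succ_nat_add_succ (n : ℕ) :
    HasSum (fun m : ℕ => 1 / (((m + n + 1 : ℕ) : ℝ) * ((m + n + 1 : ℕ) + 1))) (1 / (n + 1)) := by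
  have hanti : Antitone fun m : ℕ => 1 / ((m : ℝ) + n + 1) := fun a b hab => by
    dsimp only
    gcongr
  have hlim : Tendsto (fun m : ℕ => 1 / ((m : ℝ) + n + 1)) atTop (𝓝 0) :=
    tendsto_const_nhds.div_atTop <| tendsto_atTop_add_const_right _ _ <|
      tendsto_atTop_add_const_right _ _ tendsto_natCast_atTop_atTop
  convert hasSum_sub_succ_of_antitone hanti hlim using 1
  · funext m
    push_cast
    field_simp
    ring
  · simp

theorem hasSum_one_div_nat_add_one_pow {j : ℕ} (hj : 1 < j) :
    HasSum (fun n : ℕ => 1 / ((n : ℂ) + 1) ^ j) (riemannZeta j) := by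
  have hre : 1 < (j : ℂ).re := by simpa using hj
  have hsum : Summable fun n : ℕ => 1 / ((n : ℂ) + 1) ^ j := by
    have := (summable_nat_add_iff 1).2 (Complex.summable_one_div_nat_cpow.2 hre)
    simpa [Complex.cpow_natCast] using this
  rw [zeta_eq_tsum_one_div_nat_add_one_cpow hre]
  simpa [Complex.cpow_natCast] using hsum.hasSum

noncomputable def lurothTerm (l n : ℕ) : ℝ := ((n : ℝ) / (n + 1)) ^ l * (1 / ((n + 1) * (n + 2)))

theorem lurothTerm_nonneg (l n : ℕ) : 0 ≤ lurothTerm l n := by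
  unfold lurothTerm
  positivity

theorem hasSum_lurothTerm (l : ℕ) :
    HasSum (fun n => (lurothTerm l n : ℂ)) (2 ^ l + ∑ j ∈ Icc 2 (l + 1),
      (bernoulliTriangle l (l + 1 - j) : ℂ) * riemannZeta j * (-1) ^ (j + 1)) := by
  set y : ℕ → ℂ := fun n => 1 / ((n : ℂ) + 1)
  have hy : ∀ n, 1 + y n ≠ 0 := fun n => by
    have hn : (n : ℂ) + 1 ≠ 0 := Nat.cast_add_one_ne_zero n
    rw [one_add_div hn]
    exact div_ne_zero (by exact_mod_cast Nat.succ_ne_zero (n + 1)) hn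
  have hterm : ∀ n, (lurothTerm l n : ℂ) = 2 ^ l * (y n ^ 2 / (1 + y n))
      - ∑ j ∈ Icc 2 (l + 1), (bernoulliTriangle l (l + 1 - j) : ℂ) * (-y n) ^ j := fun n => by
    rw [← one_sub_pow_mul_sq_div_one_add l (hy n)]
    simp only [lurothTerm, y]
    push_cast
    field_simp
    ring
  have hbase : HasSum (fun n => y n ^ 2 / (1 + y n)) 1 := by
    have := Complex.hasSum_ofReal.2 (hasSum_one_div_mul_succ_nat_add_succ 0)
    convert this using 1
    · funext n
      simp only [y]
      push_cast
      field_simp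
      ring
    · simp
  have hzeta : ∀ j ∈ Icc 2 (l + 1),
      HasSum (fun n => (bernoulliTriangle l (l + 1 - j) : ℂ) * (-y n) ^ j)
        ((bernoulliTriangle l (l + 1 - j) : ℂ) * ((-1) ^ j * riemannZeta j)) := fun j hj => by
    refine ((hasSum_one_div_nat_add_one_pow (by simp at hj; omega)).mul_left ((-1) ^ j)).mul_left _
      |>.congr_fun fun n => ?_
    simp only [y]
    ring
  have hvalue : 2 ^ l + ∑ j ∈ Icc 2 (l + 1),
      (bernoulliTriangle l (l + 1 - j) : ℂ) * riemannZeta j * (-1) ^ (j + 1)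
      = 2 ^ l * 1 - ∑ j ∈ Icc 2 (l + 1),
        (bernoulliTriangle l (l + 1 - j) : ℂ) * ((-1) ^ j * riemannZeta j) := by
    rw [mul_one, sub_eq_add_neg, ← sum_neg_distrib]
    congr 1
    refine sum_congr rfl fun j _ => ?_
    ring
  rw [hvalue]
  exact ((hbase.mul_left (2 ^ l)).sub (hasSum_sum hzeta)).congr_fun hterm

theorem existsUnique_eq_sup_iff {ι α : Type*} [LinearOrder α] [OrderBot α] (s : Finset ι)
    (f : ι → α) : (∃! i, i ∈ s ∧ f i = s.sup f) ↔ ∃ i ∈ s, ∀ j ∈ s, j ≠ i → f j < f i := by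
  constructor
  · rintro ⟨i, ⟨hi, hmax⟩, huniq⟩
    refine ⟨i, hi, fun j hj hji => (hmax ▸ le_sup hj).lt_of_ne fun hj_eq => ?_⟩
    exact hji (huniq j ⟨hj, hj_eq.trans hmax⟩)
  · rintro ⟨i, hi, hlt⟩
    have hmax : s.sup f = f i :=
      le_antisymm (Finset.sup_le fun j hj => (eq_or_ne j i).elim (· ▸ le_rfl) (hlt j hj · |>.le))
        (le_sup hi)
    refine ⟨i, ⟨hi, hmax.symm⟩, fun j ⟨hj, hfj⟩ => by_contra fun hji => ?_⟩
    exact (hlt j hj hji).ne (hfj.trans hmax)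

section UniqueMax

variable {Ω ι : Type*} [DecidableEq ι]

def uniqueArgmaxEvent (X : ι → Ω → ℕ) (s : Finset ι) (i : ι) (m : ℕ) : Set Ω :=
  ⋂ j ∈ s, X j ⁻¹' (if j = i then {m} else Set.Iio m)

theorem mem_uniqueArgmaxEvent {X : ι → Ω → ℕ} {s : Finset ι} {i : ι} {m : ℕ} {ω : Ω}
    (hi : i ∈ s) : ω ∈ uniqueArgmaxEvent X s i m ↔ X i ω = m ∧ ∀ j ∈ s, j ≠ i → X j ω < m := by
  simp only [uniqueArgmaxEvent, Set.mem_iInter₂, Set.mem_preimage]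
  constructor
  · intro h
    exact ⟨by simpa using h i hi, fun j hj hji => by simpa [hji] using h j hj⟩
  · rintro ⟨hXi, hlt⟩ j hj
    by_cases hji : j = i
    · simp [hji, hXi]
    · simpa [hji] using hlt j hj hji

theorem setOf_existsUnique_eq_sup (X : ι → Ω → ℕ) (s : Finset ι) :
    {ω | ∃! i, i ∈ s ∧ X i ω = s.sup (X · ω)} = ⋃ i ∈ s, ⋃ m, uniqueArgmaxEvent X s i m := by
  ext ω
  simp only [Set.mem_ofPred_eq, existsUnique_eq_sup_iff, Set.mem_iUnion, exists_prop]
  refine exists_congr fun i => and_congr_right fun hi => ?_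
  simp [mem_uniqueArgmaxEvent hi]

theorem measure_existsUnique_eq_sup [MeasurableSpace Ω] {μ : Measure Ω} {X : ι → Ω → ℕ}
    (hmeas : ∀ i, Measurable (X i)) (hindep : iIndepFun X μ) (s : Finset ι) :
    μ {ω | ∃! i, i ∈ s ∧ X i ω = s.sup (X · ω)}
      = ∑ i ∈ s, ∑' m, μ {ω | X i ω = m} * ∏ j ∈ s.erase i, μ {ω | X j ω < m} := by
  have hW : ∀ i m, MeasurableSet (uniqueArgmaxEvent X s i m) := fun i m =>
    s.measurableSet_biInter fun j _ => hmeas j MeasurableSet.of_discrete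
  rw [setOf_existsUnique_eq_sup, measure_biUnion_finset ?disj_i fun i _ => .iUnion (hW i)]
  case disj_i =>
    intro i hi i' hi' hii'
    refine Set.disjoint_left.2 fun ω hω hω' => ?_
    simp only [Set.mem_iUnion] at hω hω'
    obtain ⟨m, hω⟩ := hω
    obtain ⟨m', hω'⟩ := hω'
    rw [mem_uniqueArgmaxEvent hi] at hω
    rw [mem_uniqueArgmaxEvent hi'] at hω'
    have := hω.2 i' hi' (Ne.symm hii')
    have := hω'.2 i hi hii'
    omega
  refine sum_congr rfl fun i hi => ?_
  rw [measure_iUnion ?disj_m (hW i)]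
  case disj_m =>
    intro m m' hmm'
    refine Set.disjoint_left.2 fun ω hω hω' => hmm' ?_
    rw [mem_uniqueArgmaxEvent hi] at hω hω'
    exact hω.1.symm.trans hω'.1
  refine tsum_congr fun m => ?_
  rw [uniqueArgmaxEvent, hindep.measure_inter_preimage_eq_mul _ fun _ _ => .of_discrete,
    ← mul_prod_erase _ _ hi, if_pos rfl]
  congr 1
  refine prod_congr rfl fun j hj => ?_
  rw [if_neg (ne_of_mem_erase hj)]
  rfl

end UniqueMax

section Luroth

variable {Ω : Type*} [MeasurableSpace Ω] {μ : Measure Ω} {Y : Ω → ℕ}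

def HasLurothDistribution (μ : Measure Ω) (Y : Ω → ℕ) : Prop :=
  ∀ n : ℕ, 1 ≤ n → μ {ω | Y ω = n} = ENNReal.ofReal (1 / (n * (n + 1)))

theorem measure_nat_lt_of_luroth (hY : Measurable Y)
    (hdist : HasLurothDistribution μ Y) (n : ℕ) :
    μ {ω | n < Y ω} = ENNReal.ofReal (1 / (n + 1)) := by
  have hunion : {ω | n < Y ω} = ⋃ m : ℕ, {ω | Y ω = m + n + 1} := by
    ext ω
    simp only [Set.mem_ofPred_eq, Set.mem_iUnion]
    exact ⟨fun h => ⟨Y ω - n - 1, by omega⟩, fun ⟨m, hm⟩ => by omega⟩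
  have hmeas : ∀ m, MeasurableSet {ω | Y ω = m} := fun m => hY (measurableSet_singleton m)
  rw [hunion, measure_iUnion ?disj fun m => hmeas _]
  case disj =>
    intro m m' hmm'
    refine Set.disjoint_left.2 fun ω (hω : _ = _) (hω' : _ = _) => hmm' ?_
    omega
  simp_rw [fun m => hdist (m + n + 1) (by omega)]
  have htail := hasSum_one_div_mul_succ_nat_add_succ n
  rw [← ENNReal.ofReal_tsum_of_nonneg (fun m => by positivity) htail.summable, htail.tsum_eq]

variable [IsProbabilityMeasure μ]

theorem measure_lt_add_one_of_luroth (hY : Measurable Y)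
    (hdist : HasLurothDistribution μ Y) (n : ℕ) :
    μ {ω | Y ω < n + 1} = ENNReal.ofReal (n / (n + 1)) := by
  have hcompl : {ω | Y ω < n + 1} = {ω | n < Y ω}ᶜ := by
    ext ω
    simp only [Set.mem_ofPred_eq, Set.mem_compl_iff]
    omega
  have hmeas : MeasurableSet {ω | n < Y ω} := hY measurableSet_Ioi
  rw [hcompl, prob_compl_eq_one_sub hmeas, measure_nat_lt_of_luroth hY hdist,
    ← ENNReal.ofReal_one, ← ENNReal.ofReal_sub _ (by positivity)]
  congr 1
  field_simp
  ring

theorem tsum_measure_mul_prod_measure_lt_of_luroth {ι : Type*} [DecidableEq ι] {X : ι → Ω → ℕ}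
    (hmeas : ∀ i, Measurable (X i))
    (hdist : ∀ i, HasLurothDistribution μ (X i)) {s : Finset ι} {i : ι} (hi : i ∈ s) :
    ∑' m, μ {ω | X i ω = m} * ∏ j ∈ s.erase i, μ {ω | X j ω < m}
      = ENNReal.ofReal (∑' n, lurothTerm (#s - 1) n) := by
  have hzero : μ {ω | X i ω = 0} = 0 := by
    simpa [Nat.lt_one_iff] using measure_lt_add_one_of_luroth (hmeas i) (hdist i) 0
  rw [tsum_eq_zero_add' ENNReal.summable, hzero, zero_mul, zero_add,
    ENNReal.ofReal_tsum_of_nonneg (lurothTerm_nonneg _)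
      (Complex.summable_ofReal.1 (hasSum_lurothTerm _).summable)]
  refine tsum_congr fun n => ?_
  rw [prod_congr rfl fun j _ => measure_lt_add_one_of_luroth (hmeas j) (hdist j) n, prod_const,
    card_erase_of_mem hi, hdist i (n + 1) (by omega), ← ENNReal.ofReal_pow (by positivity),
    ← ENNReal.ofReal_mul (by positivity), lurothTerm, mul_comm]
  push_cast
  ring_nf

end Luroth

theorem rho_k_formula_general
    {Ω : Type*} [MeasurableSpace Ω] (μ : Measure Ω) [IsProbabilityMeasure μ]
    (X : ℕ → Ω → ℕ) (hmeas : ∀ i, Measurable (X i))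
    (hindep : iIndepFun X μ)
    (hdist : ∀ i, ∀ n : ℕ, 1 ≤ n →
      μ {ω | X i ω = n} = ENNReal.ofReal (1 / (n * (n + 1))))
    (k : ℕ) :
    ((μ {ω | ∃! i, i ∈ Finset.range k ∧
        X i ω = (Finset.range k).sup (fun j => X j ω)}).toReal : ℂ)
      = k * (2 ^ (k - 1)
          + ∑ j ∈ Finset.Icc 2 k,
              (bernoulliTriangle (k - 1) (k - j) : ℂ) * riemannZeta j * (-1) ^ (j + 1)) := by
  rw [measure_existsUnique_eq_sup hmeas hindep, sum_congr rfl fun i hi =>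
    tsum_measure_mul_prod_measure_lt_of_luroth hmeas hdist hi, sum_const, card_range]
  rcases k with _ | l
  · simp
  rw [Nat.add_sub_cancel, nsmul_eq_mul, ENNReal.toReal_mul, ENNReal.toReal_natCast,
    ENNReal.toReal_ofReal (tsum_nonneg (lurothTerm_nonneg l)), Complex.ofReal_mul,
    Complex.ofReal_tsum, (hasSum_lurothTerm l).tsum_eq]
  simp

/-- For an IID sequence `X_1, X_2, …` with the Luroth distribution
`P(X = n) = 1/(n(n+1))`, the probability `ρ_k` that the maximum of `X_1, …, X_k`
is achieved by exactly one index equals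
`k (2^{k-1} + ∑_{j=2}^{k} T(k-1, k-j) ζ(j) (-1)^{j+1})`. -/
theorem rho_k_formula
    {Ω : Type*} [MeasurableSpace Ω] (μ : Measure Ω) [IsProbabilityMeasure μ]
    (X : ℕ → Ω → ℕ) (hmeas : ∀ i, Measurable (X i))
    (hindep : iIndepFun X μ)
    (hdist : ∀ i, ∀ n : ℕ, 1 ≤ n →
      μ {ω | X i ω = n} = ENNReal.ofReal (1 / (n * (n + 1))))
    (k : ℕ) (hk : 1 ≤ k) :
    ((μ {ω | ∃! i, i ∈ Finset.range k ∧
        X i ω = (Finset.range k).sup (fun j => X j ω)}).toReal : ℂ)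
      = k * (2 ^ (k - 1)
          + ∑ j ∈ Finset.Icc 2 k,
              (bernoulliTriangle (k - 1) (k - j) : ℂ) * riemannZeta j * (-1) ^ (j + 1)) :=
  rho_k_formula_general μ X hmeas hindep hdist k
end

section
/- Let X_1, X_2, … be an IID sequence of random variables with the Luroth distribution, M_k = max(X_1, …, X_k), and let ρ_k be the probability that there exists exactly one index 1 ≤ i ≤ k with X_i = M_k. Then lim_{k → ∞} ρ_k = 1. -/
/-!
Fix a threshold `a ≈ k^{3/4}`. If the maximum of `X_0, …, X_{k-1}` is not attained at a unique
index, then either every `X_i < a`, which has probability `(1 - 1/a)^k ≤ exp(-k/a)`, or two distinct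
indices tie at a common value `≥ a`. Since `P(X = n) = 1/n - 1/(n+1)` telescopes to
`P(X ≥ a) = 1/a`, and `P(X = n) ≤ 1/a²` for `n ≥ a`, independence bounds a tie of a fixed pair by
`a⁻² · P(X ≥ a) = 1/a³`, so all ties together have probability at most `k²/a³`. With
`a = ⌈k^{3/4}⌉` both bounds tend to `0`.
-/

open MeasureTheory ProbabilityTheory Finset Filter Topology Real
open scoped ENNReal

lemma one_sub_one_div_natCast_nonneg (n : ℕ) : (0 : ℝ) ≤ 1 - 1 / n := by
  simpa using Nat.cast_inv_le_one (α := ℝ) n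

lemma hasSum_one_div_mul_succ {a : ℕ} (ha : 0 < a) :
    HasSum (fun n : ℕ => 1 / (((a + n : ℕ) : ℝ) * ((a + n : ℕ) + 1))) (1 / a) := by
  set f : ℕ → ℝ := fun n => 1 / ((a + n : ℕ) : ℝ)
  have hterm : ∀ n, 1 / (((a + n : ℕ) : ℝ) * ((a + n : ℕ) + 1)) = f n - f (n + 1) := by
    intro n
    have : (0 : ℝ) < (a + n : ℕ) := by exact_mod_cast Nat.add_pos_left ha n
    simp only [f]
    push_cast
    field_simp
    ring
  have hf : Tendsto f atTop (𝓝 0) :=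
    tendsto_one_div_atTop_nhds_zero_nat.comp
      (tendsto_atTop_mono (Nat.le_add_left · a) tendsto_id)
  rw [hasSum_iff_tendsto_nat_of_nonneg (fun n => by positivity)]
  simp_rw [hterm, Finset.sum_range_sub']
  simpa [f] using (tendsto_const_nhds (x := f 0)).sub hf

lemma measure_setOf_le_eq_tsum {Ω : Type*} [MeasurableSpace Ω] {μ : Measure Ω} {Y : Ω → ℕ}
    (hY : Measurable Y) (a : ℕ) :
    μ {ω | a ≤ Y ω} = ∑' n : ℕ, μ {ω | Y ω = a + n} := by
  rw [← measure_iUnion]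
  · congr 1
    ext ω
    simp only [Set.mem_ofPred_eq, Set.mem_iUnion]
    exact ⟨fun h => ⟨Y ω - a, by omega⟩, fun ⟨n, hn⟩ => by omega⟩
  · intro m n hmn
    exact Set.disjoint_left.mpr fun ω hm hn => hmn (by simp_all)
  · exact fun n => hY (measurableSet_singleton _)

lemma Finset.forall_lt_or_exists_tie_of_not_existsUnique {ι α : Type*} [LinearOrder α]
    [OrderBot α] {s : Finset ι} {x : ι → α} (a : α) (h : ¬ ∃! i, i ∈ s ∧ x i = s.sup x) :
    (∀ i ∈ s, x i < a) ∨ ∃ i ∈ s, ∃ j ∈ s, i ≠ j ∧ a ≤ x i ∧ x i = x j := by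
  rcases s.eq_empty_or_nonempty with rfl | hs
  · simp
  obtain ⟨i, hi, hmax⟩ := s.exists_mem_eq_sup hs x
  rcases lt_or_ge (x i) a with hlt | hle
  · exact Or.inl fun j hj => (hmax ▸ s.le_sup hj).trans_lt hlt
  · obtain ⟨j, ⟨hj, hjmax⟩, hji⟩ : ∃ j, (j ∈ s ∧ x j = s.sup x) ∧ j ≠ i := by
      by_contra! hno
      exact h ⟨i, ⟨hi, hmax.symm⟩, fun j hj => hno j hj⟩
    exact Or.inr ⟨i, hi, j, hj, hji.symm, hle, hmax.symm.trans hjmax.symm⟩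

def IsLuroth {Ω : Type*} [MeasurableSpace Ω] (μ : Measure Ω) (Y : Ω → ℕ) : Prop :=
  ∀ n : ℕ, 1 ≤ n → μ {ω | Y ω = n} = ENNReal.ofReal (1 / (n * (n + 1)))

namespace IsLuroth

variable {Ω : Type*} [MeasurableSpace Ω] {μ : Measure Ω}

section OneVariable

variable {Y : Ω → ℕ}

lemma measure_tail (hY : Measurable Y) (h : IsLuroth μ Y) {a : ℕ} (ha : 0 < a) :
    μ {ω | a ≤ Y ω} = ENNReal.ofReal (1 / a) := by
  rw [measure_setOf_le_eq_tsum hY, ← (hasSum_one_div_mul_succ ha).tsum_eq,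
    ENNReal.ofReal_tsum_of_nonneg (fun n => by positivity) (hasSum_one_div_mul_succ ha).summable]
  exact tsum_congr fun n => h _ (by omega)

lemma measure_lt [IsProbabilityMeasure μ] (hY : Measurable Y) (h : IsLuroth μ Y) {a : ℕ}
    (ha : 0 < a) : μ {ω | Y ω < a} = ENNReal.ofReal (1 - 1 / a) := by
  have hc : {ω | Y ω < a} = {ω | a ≤ Y ω}ᶜ := by ext; simp
  rw [hc, prob_compl_eq_one_sub (measurableSet_le measurable_const hY), measure_tail hY h ha,
    ENNReal.ofReal_sub _ (by positivity), ENNReal.ofReal_one]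

lemma measure_eq_le_of_le (h : IsLuroth μ Y) {a m : ℕ} (ha : 0 < a) (hm : a ≤ m) :
    μ {ω | Y ω = m} ≤ ENNReal.ofReal (1 / a ^ 2) := by
  rw [h m (by omega)]
  apply ENNReal.ofReal_le_ofReal
  have : (a : ℝ) ≤ m := by exact_mod_cast hm
  have : (0 : ℝ) < a := by exact_mod_cast ha
  gcongr
  nlinarith

end OneVariable

lemma measure_tie_le {X Y : Ω → ℕ} (hY : Measurable Y) (hXL : IsLuroth μ X)
    (hYL : IsLuroth μ Y) (hind : IndepFun X Y μ) {a : ℕ} (ha : 0 < a) :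
    μ {ω | a ≤ X ω ∧ X ω = Y ω} ≤ ENNReal.ofReal (1 / a ^ 3) := by
  have hsub : {ω | a ≤ X ω ∧ X ω = Y ω} ⊆ ⋃ n : ℕ, X ⁻¹' {a + n} ∩ Y ⁻¹' {a + n} := by
    rintro ω ⟨hle, heq⟩
    simp only [Set.mem_iUnion, Set.mem_inter_iff, Set.mem_preimage, Set.mem_singleton_iff]
    exact ⟨X ω - a, by omega, by omega⟩
  calc μ {ω | a ≤ X ω ∧ X ω = Y ω}
      ≤ ∑' n : ℕ, μ (X ⁻¹' {a + n} ∩ Y ⁻¹' {a + n}) :=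
        (measure_mono hsub).trans (measure_iUnion_le _)
    _ = ∑' n : ℕ, μ {ω | X ω = a + n} * μ {ω | Y ω = a + n} :=
        tsum_congr fun n => hind.measure_inter_preimage_eq_mul _ _
          (measurableSet_singleton _) (measurableSet_singleton _)
    _ ≤ ∑' n : ℕ, ENNReal.ofReal (1 / a ^ 2) * μ {ω | Y ω = a + n} :=
        ENNReal.tsum_le_tsum fun n => mul_le_mul_left (hXL.measure_eq_le_of_le ha (by omega)) _
    _ = ENNReal.ofReal (1 / a ^ 2) * ENNReal.ofReal (1 / a) := by
        rw [ENNReal.tsum_mul_left, ← measure_setOf_le_eq_tsum hY, hYL.measure_tail hY ha]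
    _ = ENNReal.ofReal (1 / a ^ 3) := by
        rw [← ENNReal.ofReal_mul (by positivity)]
        congr 1
        ring

variable {ι : Type*} [IsProbabilityMeasure μ] {X : ι → Ω → ℕ}

lemma measure_forall_lt (hX : ∀ i, Measurable (X i)) (hL : ∀ i, IsLuroth μ (X i))
    (hind : iIndepFun X μ) (s : Finset ι) {a : ℕ} (ha : 0 < a) :
    μ {ω | ∀ i ∈ s, X i ω < a} = ENNReal.ofReal (1 - 1 / a) ^ #s := by
  have hset : {ω | ∀ i ∈ s, X i ω < a} = ⋂ i ∈ s, X i ⁻¹' Set.Iio a := by ext; simp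
  rw [hset, hind.measure_inter_preimage_eq_mul s fun _ _ => measurableSet_Iio]
  exact Finset.prod_eq_pow_card fun i _ => (hL i).measure_lt (hX i) ha

lemma measure_compl_uniqueMax_le (hX : ∀ i, Measurable (X i)) (hL : ∀ i, IsLuroth μ (X i))
    (hind : iIndepFun X μ) (s : Finset ι) {a : ℕ} (ha : 0 < a) :
    μ {ω | ∃! i, i ∈ s ∧ X i ω = s.sup (fun j => X j ω)}ᶜ
      ≤ ENNReal.ofReal ((1 - 1 / a) ^ #s + #s ^ 2 / a ^ 3) := by
  have hsub : {ω | ∃! i, i ∈ s ∧ X i ω = s.sup (fun j => X j ω)}ᶜ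
      ⊆ {ω | ∀ i ∈ s, X i ω < a} ∪ ⋃ p ∈ s.offDiag, {ω | a ≤ X p.1 ω ∧ X p.1 ω = X p.2 ω} := by
    intro ω hω
    rcases s.forall_lt_or_exists_tie_of_not_existsUnique a hω with
      hlt | ⟨i, hi, j, hj, hij, htie⟩
    · exact Or.inl hlt
    · exact Or.inr (Set.mem_biUnion (x := (i, j)) (Finset.mem_offDiag.mpr ⟨hi, hj, hij⟩) htie)
  have htie : ∀ p ∈ s.offDiag,
      μ {ω | a ≤ X p.1 ω ∧ X p.1 ω = X p.2 ω} ≤ ENNReal.ofReal (1 / a ^ 3) :=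
    fun p hp => (hL p.1).measure_tie_le (hX p.2) (hL p.2)
      (hind.indepFun (Finset.mem_offDiag.mp hp).2.2) ha
  have hcard : (#s.offDiag : ℝ≥0∞) ≤ ENNReal.ofReal (#s ^ 2) := by
    rw [Finset.offDiag_card, ENNReal.ofReal_pow (by positivity), ENNReal.ofReal_natCast]
    exact_mod_cast Nat.sub_le _ _ |>.trans (pow_two _).ge
  calc _ ≤ μ {ω | ∀ i ∈ s, X i ω < a}
          + ∑ p ∈ s.offDiag, μ {ω | a ≤ X p.1 ω ∧ X p.1 ω = X p.2 ω} :=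
        (measure_mono hsub).trans <| (measure_union_le _ _).trans <| by
          gcongr; exact measure_biUnion_finset_le _ _
    _ ≤ ENNReal.ofReal (1 - 1 / a) ^ #s + #s.offDiag * ENNReal.ofReal (1 / a ^ 3) := by
        rw [measure_forall_lt hX hL hind s ha, ← nsmul_eq_mul]
        gcongr; exact Finset.sum_le_card_nsmul _ _ _ htie
    _ ≤ ENNReal.ofReal ((1 - 1 / a) ^ #s + #s ^ 2 / a ^ 3) := by
        rw [ENNReal.ofReal_add (pow_nonneg (one_sub_one_div_natCast_nonneg a) _) (by positivity),
          ENNReal.ofReal_pow (one_sub_one_div_natCast_nonneg a),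
          div_eq_mul_one_div ((#s : ℝ) ^ 2), ENNReal.ofReal_mul (by positivity)]
        gcongr

lemma one_sub_le_toReal_measure_uniqueMax (hX : ∀ i, Measurable (X i))
    (hL : ∀ i, IsLuroth μ (X i)) (hind : iIndepFun X μ) (s : Finset ι) {a : ℕ} (ha : 0 < a) :
    1 - ((1 - 1 / a) ^ #s + #s ^ 2 / a ^ 3)
      ≤ (μ {ω | ∃! i, i ∈ s ∧ X i ω = s.sup (fun j => X j ω)}).toReal := by
  set E := {ω | ∃! i, i ∈ s ∧ X i ω = s.sup (fun j => X j ω)}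
  have he : (0 : ℝ) ≤ (1 - 1 / a) ^ #s + #s ^ 2 / a ^ 3 :=
    add_nonneg (pow_nonneg (one_sub_one_div_natCast_nonneg a) _) (by positivity)
  have h1 : 1 ≤ μ E + ENNReal.ofReal ((1 - 1 / a) ^ #s + #s ^ 2 / a ^ 3) :=
    calc 1 = μ Set.univ := measure_univ.symm
      _ ≤ μ E + μ Eᶜ := measure_univ_le_add_compl E
      _ ≤ _ := by gcongr; exact measure_compl_uniqueMax_le hX hL hind s ha
  have h2 := ENNReal.toReal_mono (by finiteness) h1
  rw [ENNReal.toReal_add (measure_ne_top μ E) ENNReal.ofReal_ne_top, ENNReal.toReal_ofReal he,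
    ENNReal.toReal_one] at h2
  linarith

end IsLuroth

lemma one_sub_inv_pow_add_le {x : ℝ} (hx : 1 ≤ x) {k : ℕ} (hk : (k : ℝ) = x ^ 4) :
    (1 - 1 / (⌈x ^ 3⌉₊ : ℝ)) ^ k + k ^ 2 / (⌈x ^ 3⌉₊ : ℝ) ^ 3 ≤ exp (-(x / 2)) + 1 / x := by
  set a : ℝ := (⌈x ^ 3⌉₊ : ℝ)
  have hx3 : 1 ≤ x ^ 3 := one_le_pow₀ hx
  have ha_ge : x ^ 3 ≤ a := Nat.le_ceil _
  have ha_le : a ≤ 2 * x ^ 3 := by linarith [Nat.ceil_lt_add_one (by linarith : (0 : ℝ) ≤ x ^ 3)]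
  have ha_pos : 0 < a := by linarith
  gcongr ?_ + ?_
  · calc (1 - 1 / a) ^ k ≤ exp (-(1 / a)) ^ k :=
          pow_le_pow_left₀ (one_sub_one_div_natCast_nonneg _)
            (by linarith [add_one_le_exp (-(1 / a))]) k
      _ = exp (-(k / a)) := by rw [← exp_nat_mul]; ring_nf
      _ ≤ exp (-(x / 2)) := by
          rw [exp_le_exp, neg_le_neg_iff, hk, div_le_div_iff₀ two_pos ha_pos]
          nlinarith
  · rw [hk, div_le_div_iff₀ (by positivity) (by positivity)]
    calc (x ^ 4) ^ 2 * x = 1 * (x ^ 3) ^ 3 := by ring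
      _ ≤ 1 * a ^ 3 := by gcongr

noncomputable def threshold (k : ℕ) : ℕ := ⌈(k : ℝ) ^ (3 / 4 : ℝ)⌉₊

lemma threshold_pos {k : ℕ} (hk : 1 ≤ k) : 0 < threshold k :=
  Nat.ceil_pos.mpr (rpow_pos_of_pos (by exact_mod_cast hk) _)

lemma tendsto_threshold_bound :
    Tendsto (fun k : ℕ => (1 - 1 / (threshold k : ℝ)) ^ k + k ^ 2 / (threshold k : ℝ) ^ 3)
      atTop (𝓝 0) := by
  set x : ℕ → ℝ := fun k => (k : ℝ) ^ (4⁻¹ : ℝ)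
  have hx : Tendsto x atTop atTop :=
    (tendsto_rpow_atTop (by norm_num)).comp tendsto_natCast_atTop_atTop
  have hlim : Tendsto (fun k => exp (-(x k / 2)) + 1 / x k) atTop (𝓝 0) := by
    simpa using (tendsto_exp_atBot.comp (tendsto_neg_atTop_atBot.comp
      (hx.atTop_div_const two_pos))).add (tendsto_inv_atTop_zero.comp hx)
  refine squeeze_zero' (Eventually.of_forall fun k => ?_) ?_ hlim
  · exact add_nonneg (pow_nonneg (one_sub_one_div_natCast_nonneg _) _) (by positivity)
  · filter_upwards [hx.eventually_ge_atTop 1] with k hk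
    have hthr : (threshold k : ℝ) = ⌈x k ^ 3⌉₊ := by
      simp only [threshold, x, ← rpow_natCast, ← rpow_mul (Nat.cast_nonneg k)]
      norm_num
    rw [hthr]
    exact one_sub_inv_pow_add_le hk (rpow_inv_natCast_pow (Nat.cast_nonneg k) four_ne_zero).symm

/-- For an IID sequence `X_1, X_2, …` with the Luroth distribution
`P(X = n) = 1/(n(n+1))`, the probability `ρ_k` that the maximum of `X_1, …, X_k`
is achieved by exactly one index tends to `1` as `k → ∞`. -/
theorem rho_k_tendsto_one
    {Ω : Type*} [MeasurableSpace Ω] (μ : Measure Ω) [IsProbabilityMeasure μ]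
    (X : ℕ → Ω → ℕ) (hmeas : ∀ i, Measurable (X i))
    (hindep : iIndepFun X μ)
    (hdist : ∀ i, ∀ n : ℕ, 1 ≤ n →
      μ {ω | X i ω = n} = ENNReal.ofReal (1 / (n * (n + 1)))) :
    Filter.Tendsto
      (fun k : ℕ => (μ {ω | ∃! i, i ∈ Finset.range k ∧
          X i ω = (Finset.range k).sup (fun j => X j ω)}).toReal)
      Filter.atTop (nhds 1) := by
  have hlower : ∀ᶠ k : ℕ in atTop,
      1 - ((1 - 1 / (threshold k : ℝ)) ^ k + k ^ 2 / (threshold k : ℝ) ^ 3)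
        ≤ (μ {ω | ∃! i, i ∈ range k ∧ X i ω = (range k).sup (fun j => X j ω)}).toReal := by
    filter_upwards [eventually_ge_atTop 1] with k hk
    simpa using IsLuroth.one_sub_le_toReal_measure_uniqueMax hmeas hdist hindep (range k)
      (threshold_pos hk)
  refine tendsto_of_tendsto_of_tendsto_of_le_of_le' ?_ tendsto_const_nhds hlower
    (Eventually.of_forall fun k => measureReal_le_one)
  simpa using tendsto_const_nhds.sub tendsto_threshold_bound
end

section
/- Let X_1, X_2, … be an IID sequence of random variables with the Luroth distribution and M_k = max(X_1, …, X_k). Then for every real c > 0, lim_{k → ∞} P(M_k ≤ c·k) = e^{−1/c}. -/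
/-!
By independence, P(M_k ≤ m) = P(X_1 ≤ m)^k = (m/(m+1))^k, because the Luroth tail
P(X > m) = ∑_{n>m} (1/n - 1/(n+1)) telescopes to 1/(m+1). Since M_k is an integer,
P(M_k ≤ ck) = (1 - 1/(⌊ck⌋+1))^k, and k/(⌊ck⌋+1) → 1/c gives the limit e^{-1/c}.
-/

open MeasureTheory ProbabilityTheory Filter Topology

lemma hasSum_one_div_mul_succ_tail (m : ℕ) :
    HasSum (fun j : ℕ => 1 / (((m + 1 + j : ℕ) : ℝ) * ((m + 1 + j : ℕ) + 1)))
      (1 / ((m : ℝ) + 1)) := by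
  set g : ℕ → ℝ := fun j => 1 / ((m : ℝ) + 1 + j)
  have hterm : ∀ j : ℕ,
      1 / (((m + 1 + j : ℕ) : ℝ) * ((m + 1 + j : ℕ) + 1)) = g j - g (j + 1) := by
    intro j
    simp only [g]
    push_cast
    field_simp
    ring
  have hg : Tendsto g atTop (𝓝 0) :=
    tendsto_const_nhds.div_atTop
      (tendsto_atTop_add_const_left _ _ tendsto_natCast_atTop_atTop)
  rw [hasSum_iff_tendsto_nat_of_nonneg (fun j => by positivity)]
  simp_rw [hterm, Finset.sum_range_sub']
  simpa [g] using tendsto_const_nhds.sub hg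

lemma measure_le_eq_div_succ_of_luroth {Ω : Type*} [MeasurableSpace Ω] {μ : Measure Ω}
    [IsProbabilityMeasure μ] {Y : Ω → ℕ} (hY : Measurable Y)
    (hd : ∀ n : ℕ, 1 ≤ n → μ {ω | Y ω = n} = ENNReal.ofReal (1 / (n * (n + 1))))
    (m : ℕ) : μ {ω | Y ω ≤ m} = ENNReal.ofReal ((m : ℝ) / (m + 1)) := by
  have htail_eq : {ω | Y ω ≤ m}ᶜ = ⋃ j : ℕ, {ω | Y ω = m + 1 + j} := by
    ext ω
    simp only [Set.mem_compl_iff, Set.mem_ofPred_eq, Set.mem_iUnion, not_le]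
    exact ⟨fun h => ⟨Y ω - (m + 1), by omega⟩, fun ⟨j, hj⟩ => by omega⟩
  have hdisj : Pairwise (Function.onFun Disjoint fun j : ℕ => {ω | Y ω = m + 1 + j}) :=
    fun i j hij => Set.disjoint_left.2 fun ω hi hj => hij (by simp_all)
  have hsum := hasSum_one_div_mul_succ_tail m
  have htail : μ {ω | Y ω ≤ m}ᶜ = ENNReal.ofReal (1 / ((m : ℝ) + 1)) := by
    rw [htail_eq, measure_iUnion hdisj fun j => hY (measurableSet_singleton _),
      ← hsum.tsum_eq, ENNReal.ofReal_tsum_of_nonneg (fun j => by positivity) hsum.summable]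
    exact tsum_congr fun j => hd (m + 1 + j) (by omega)
  have hs : MeasurableSet {ω | Y ω ≤ m} := hY measurableSet_Iic
  rw [← compl_compl {ω | Y ω ≤ m}, prob_compl_eq_one_sub hs.compl, htail, ← ENNReal.ofReal_one,
    ← ENNReal.ofReal_sub _ (by positivity)]
  congr 1
  field_simp
  ring

lemma ProbabilityTheory.iIndepFun.measure_finset_sup_le {Ω ι β : Type*} [MeasurableSpace Ω]
    {μ : Measure Ω} [SemilatticeSup β] [OrderBot β] [TopologicalSpace β] [MeasurableSpace β]
    [OpensMeasurableSpace β] [ClosedIicTopology β]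
    {X : ι → Ω → β} (hX : iIndepFun X μ) (s : Finset ι) (b : β) :
    μ {ω | s.sup (fun j => X j ω) ≤ b} = ∏ j ∈ s, μ {ω | X j ω ≤ b} := by
  have hset : {ω | s.sup (fun j => X j ω) ≤ b} = ⋂ j ∈ s, {ω | X j ω ≤ b} := by
    ext ω
    simp [Finset.sup_le_iff]
  rw [hset]
  exact hX.meas_biInter fun j _ => ⟨Set.Iic b, measurableSet_Iic, rfl⟩

lemma tendsto_natCast_mul_neg_one_div_floor_add_one {c : ℝ} (hc : 0 < c) :
    Tendsto (fun k : ℕ => (k : ℝ) * (-1 / (⌊c * k⌋₊ + 1))) atTop (𝓝 (-1 / c)) := by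
  have hfloor : Tendsto (fun k : ℕ => ((⌊c * k⌋₊ : ℝ) + 1) / k) atTop (𝓝 c) := by
    have h := ((tendsto_nat_floor_mul_div_atTop hc.le).comp tendsto_natCast_atTop_atTop).add
      tendsto_one_div_atTop_nhds_zero_nat
    rw [add_zero] at h
    refine h.congr fun k => ?_
    simp [add_div]
  rw [neg_div, one_div]
  refine (hfloor.inv₀ hc.ne').neg.congr fun k => ?_
  rw [inv_div]
  ring

lemma tendsto_floor_mul_div_floor_mul_add_one_pow {c : ℝ} (hc : 0 < c) :
    Tendsto (fun k : ℕ => ((⌊c * k⌋₊ : ℝ) / (⌊c * k⌋₊ + 1)) ^ k) atTop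
      (𝓝 (Real.exp (-1 / c))) := by
  refine (Real.tendsto_one_add_pow_exp_of_tendsto
    (tendsto_natCast_mul_neg_one_div_floor_add_one hc)).congr fun k => ?_
  congr 1
  field_simp
  ring

/-- For an IID sequence `X_1, X_2, …` with the Luroth distribution
`P(X = n) = 1/(n(n+1))` and `M_k = max(X_1, …, X_k)`, for every `c > 0`,
`lim_{k → ∞} P(M_k ≤ c k) = e^{-1/c}`. -/
theorem max_luroth_scaling_limit
    {Ω : Type*} [MeasurableSpace Ω] (μ : Measure Ω) [IsProbabilityMeasure μ]
    (X : ℕ → Ω → ℕ) (hmeas : ∀ i, Measurable (X i))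
    (hindep : iIndepFun X μ)
    (hdist : ∀ i, ∀ n : ℕ, 1 ≤ n →
      μ {ω | X i ω = n} = ENNReal.ofReal (1 / (n * (n + 1))))
    (c : ℝ) (hc : 0 < c) :
    Filter.Tendsto
      (fun k : ℕ =>
        (μ {ω | (((Finset.range k).sup fun j => X j ω : ℕ) : ℝ) ≤ c * k}).toReal)
      Filter.atTop (nhds (Real.exp (-1 / c))) := by
  refine (tendsto_floor_mul_div_floor_mul_add_one_pow hc).congr fun k => ?_
  have hevent : {ω | (((Finset.range k).sup fun j => X j ω : ℕ) : ℝ) ≤ c * k}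
      = {ω | ((Finset.range k).sup fun j => X j ω) ≤ ⌊c * k⌋₊} := by
    ext ω
    simp only [Set.mem_ofPred_eq, Nat.le_floor_iff (by positivity : (0 : ℝ) ≤ c * k)]
  rw [hevent, hindep.measure_finset_sup_le,
    Finset.prod_congr rfl fun i _ => measure_le_eq_div_succ_of_luroth (hmeas i) (hdist i) _,
    Finset.prod_const, Finset.card_range, ENNReal.toReal_pow,
    ENNReal.toReal_ofReal (by positivity)]
end

section
/- Let X_1, X_2, … be an IID sequence of random variables with the Luroth distribution and M_k = max(X_1, …, X_k). Then M_k/(k log k) converges to 0 in probability: for every ε > 0, lim_{k → ∞} P(M_k > ε · k log k) = 0. -/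
/-!
A Luroth variable has tail `P(X > t) ≤ 1/t`, so the union bound over the `k` variables gives
`P(M_k > ε k log k) ≤ k / (ε k log k) = 1 / (ε log k) → 0`.
-/

open MeasureTheory ProbabilityTheory Filter Finset

theorem sum_Icc_one_div_mul_add_one (m : ℕ) :
    ∑ n ∈ Icc 1 m, (1 / (n * (n + 1)) : ℝ) = 1 - 1 / (m + 1) := by
  induction m with
  | zero => simp
  | succ m ih =>
    rw [sum_Icc_succ_top (by omega), ih]
    push_cast
    field_simp
    ring

section Luroth

variable {Ω : Type*} [MeasurableSpace Ω] {μ : Measure Ω} [IsProbabilityMeasure μ]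

def HasLurothDist (μ : Measure Ω) (Y : Ω → ℕ) : Prop :=
  ∀ n : ℕ, 1 ≤ n → μ {ω | Y ω = n} = ENNReal.ofReal (1 / (n * (n + 1)))

theorem HasLurothDist.measureReal_natCast_lt_le {Y : Ω → ℕ} (hY : Measurable Y)
    (hd : HasLurothDist μ Y) (m : ℕ) :
    μ.real {ω | m < Y ω} ≤ 1 / (m + 1) := by
  have hIcc : μ.real (Y ⁻¹' ↑(Icc 1 m)) = 1 - 1 / (m + 1) := by
    rw [← sum_measureReal_preimage_singleton _ fun n _ => hY (measurableSet_singleton n),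
      ← sum_Icc_one_div_mul_add_one]
    refine sum_congr rfl fun n hn => ?_
    rw [measureReal_def, show Y ⁻¹' {n} = {ω | Y ω = n} from rfl, hd n (mem_Icc.mp hn).1,
      ENNReal.toReal_ofReal (by positivity)]
  have hsub : {ω | m < Y ω} ⊆ (Y ⁻¹' ↑(Icc 1 m))ᶜ := fun ω hω hω' => by
    simp only [Set.mem_ofPred_eq, Set.mem_preimage, coe_Icc, Set.mem_Icc] at hω hω'
    omega
  calc μ.real {ω | m < Y ω} ≤ μ.real (Y ⁻¹' ↑(Icc 1 m))ᶜ := measureReal_mono hsub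
    _ = 1 / (m + 1) := by
      rw [probReal_compl_eq_one_sub (hY (Finset.measurableSet _)), hIcc]
      ring

theorem HasLurothDist.measureReal_lt_le {Y : Ω → ℕ} (hY : Measurable Y)
    (hd : HasLurothDist μ Y) {t : ℝ} (ht : 0 < t) :
    μ.real {ω | t < Y ω} ≤ t⁻¹ := by
  have hfloor : {ω | t < Y ω} = {ω | ⌊t⌋₊ < Y ω} := by
    ext ω
    simp only [Set.mem_ofPred_eq, Nat.floor_lt ht.le]
  calc μ.real {ω | t < Y ω} ≤ 1 / (⌊t⌋₊ + 1) := hfloor ▸ hd.measureReal_natCast_lt_le hY _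
    _ ≤ t⁻¹ := by
      rw [one_div]
      exact inv_anti₀ ht (Nat.lt_floor_add_one t).le

end Luroth

theorem measureReal_lt_finsetSup_le {Ω ι : Type*} [MeasurableSpace Ω] (μ : Measure Ω)
    [IsFiniteMeasure μ] (s : Finset ι) (X : ι → Ω → ℕ) {t : ℝ} (ht : 0 ≤ t) :
    μ.real {ω | t < ((s.sup fun j => X j ω : ℕ) : ℝ)} ≤ ∑ j ∈ s, μ.real {ω | t < X j ω} := by
  have hsub : {ω | t < ((s.sup fun j => X j ω : ℕ) : ℝ)} ⊆ ⋃ j ∈ s, {ω | t < X j ω} := by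
    intro ω hω
    obtain ⟨j, hj, hlt⟩ := Finset.lt_sup_iff.mp ((Nat.floor_lt ht).mpr hω)
    exact Set.mem_biUnion hj ((Nat.floor_lt ht).mp hlt)
  exact (measureReal_mono hsub (measure_ne_top μ _)).trans (measureReal_biUnion_finset_le _ _)

theorem max_div_klogk_tendsto_zero_in_probability_general
    {Ω : Type*} [MeasurableSpace Ω] (μ : Measure Ω) [IsProbabilityMeasure μ]
    (X : ℕ → Ω → ℕ) (hmeas : ∀ i, Measurable (X i))
    (hdist : ∀ i, ∀ n : ℕ, 1 ≤ n →
      μ {ω | X i ω = n} = ENNReal.ofReal (1 / (n * (n + 1))))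
    (ε : ℝ) (hε : 0 < ε) :
    Filter.Tendsto
      (fun k : ℕ =>
        (μ {ω | ε * (k * Real.log k)
            < (((Finset.range k).sup fun j => X j ω : ℕ) : ℝ)}).toReal)
      Filter.atTop (nhds 0) := by
  have hlog : Tendsto (fun k : ℕ => (ε * Real.log k)⁻¹) atTop (nhds 0) :=
    Tendsto.inv_tendsto_atTop <|
      (Real.tendsto_log_atTop.comp tendsto_natCast_atTop_atTop).const_mul_atTop hε
  refine squeeze_zero' (Eventually.of_forall fun k => measureReal_nonneg) ?_ hlog
  filter_upwards [eventually_gt_atTop 1] with k hk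
  have hlogk : 0 < Real.log k := Real.log_pos (by exact_mod_cast hk)
  have ht : 0 < ε * (k * Real.log k) := by positivity
  calc μ.real {ω | ε * (k * Real.log k) < (((range k).sup fun j => X j ω : ℕ) : ℝ)}
      ≤ ∑ j ∈ range k, μ.real {ω | ε * (k * Real.log k) < X j ω} :=
        measureReal_lt_finsetSup_le μ _ X ht.le
    _ ≤ ∑ _j ∈ range k, (ε * (k * Real.log k))⁻¹ :=
        sum_le_sum fun j _ => HasLurothDist.measureReal_lt_le (hmeas j) (hdist j) ht
    _ = (ε * Real.log k)⁻¹ := by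
      rw [sum_const, card_range, nsmul_eq_mul]
      field_simp

/-- For an IID sequence `X_1, X_2, …` with the Luroth distribution
`P(X = n) = 1/(n(n+1))` and `M_k = max(X_1, …, X_k)`, the maximum `M_k / (k log k)`
tends to `0` in probability: for every `ε > 0`, `P(M_k > ε k log k) → 0`. -/
theorem max_div_klogk_tendsto_zero_in_probability
    {Ω : Type*} [MeasurableSpace Ω] (μ : Measure Ω) [IsProbabilityMeasure μ]
    (X : ℕ → Ω → ℕ) (hmeas : ∀ i, Measurable (X i))
    (hindep : iIndepFun X μ)
    (hdist : ∀ i, ∀ n : ℕ, 1 ≤ n →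
      μ {ω | X i ω = n} = ENNReal.ofReal (1 / (n * (n + 1))))
    (ε : ℝ) (hε : 0 < ε) :
    Filter.Tendsto
      (fun k : ℕ =>
        (μ {ω | ε * (k * Real.log k)
            < (((Finset.range k).sup fun j => X j ω : ℕ) : ℝ)}).toReal)
      Filter.atTop (nhds 0) :=
  max_div_klogk_tendsto_zero_in_probability_general μ X hmeas hdist ε hε
end

section
/- Let B : [0, ∞) → [1, ∞) be the inverse of the strictly increasing function A(y) = y log y on [1, ∞), i.e., B(x) is the unique y ≥ 1 with y log y = x for x ≥ 0. Then the series Σ_{n=2}^{∞} (1/n²) · (B(n)² − B(n−1)²) converges (to a finite value). -/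
/-!
Write `b = B(n+1)`, `c = B(n+2)`, so that `n + 2 = c log c`. From `log (c/b) ≥ 1 - b/c` we get
`c² - b² ≤ 2c(c - b) ≤ 2c² (log c - log b)`, hence the `n`-th term is at most
`2 (log c - log b) / (log c)² ≤ 2 / log b - 2 / log c`. The series is therefore dominated by the
telescoping series of the nonnegative sequence `2 / log B(n+1)`.
-/

open Real Set

theorem summable_of_le_sub_succ {f g : ℕ → ℝ} (hf : ∀ n, 0 ≤ f n) (hg : ∀ n, 0 ≤ g n)
    (hfg : ∀ n, f n ≤ g n - g (n + 1)) : Summable f :=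
  summable_of_sum_range_le hf fun n => calc
    ∑ i ∈ Finset.range n, f i ≤ ∑ i ∈ Finset.range n, (g i - g (i + 1)) :=
      Finset.sum_le_sum fun i _ => hfg i
    _ = g 0 - g n := Finset.sum_range_sub' g n
    _ ≤ g 0 := sub_le_self _ (hg n)

theorem sub_le_mul_log_sub_log {b c : ℝ} (hb : 0 < b) (hc : 0 < c) :
    c - b ≤ c * (log c - log b) := by
  have h := one_sub_inv_le_log_of_pos (div_pos hc hb)
  rw [log_div hc.ne' hb.ne', inv_div] at h
  calc c - b = c * (1 - b / c) := by field_simp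
    _ ≤ c * (log c - log b) := mul_le_mul_of_nonneg_left h hc.le

theorem sq_sub_sq_div_sq_mul_log_le {b c : ℝ} (hb : 1 < b) (hbc : b ≤ c) :
    (c ^ 2 - b ^ 2) / (c * log c) ^ 2 ≤ 2 / log b - 2 / log c := by
  have hL : 0 < log b := log_pos hb
  have hM : 0 < log c := log_pos (hb.trans_le hbc)
  have hLM : log b ≤ log c := log_le_log (by linarith) hbc
  have hc : 0 < c := by linarith
  have hsq : c ^ 2 - b ^ 2 ≤ 2 * c ^ 2 * (log c - log b) := by
    nlinarith [sub_le_mul_log_sub_log (by linarith : 0 < b) hc]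
  calc (c ^ 2 - b ^ 2) / (c * log c) ^ 2
      ≤ 2 * c ^ 2 * (log c - log b) / (c * log c) ^ 2 := by gcongr
    _ = 2 * (log c - log b) / (log c * log c) := by field_simp
    _ ≤ 2 * (log c - log b) / (log b * log c) := by gcongr
    _ = 2 / log b - 2 / log c := by field_simp

section InverseMulLog

variable {B : ℝ → ℝ} (hB : ∀ x : ℝ, 0 ≤ x → 1 ≤ B x ∧ B x * log (B x) = x)
include hB

theorem one_lt_of_mul_log_inverse {x : ℝ} (hx : 0 < x) : 1 < B x := by
  obtain ⟨h1, hx'⟩ := hB x hx.le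
  refine h1.lt_of_ne fun h => ?_
  rw [← h, log_one, mul_zero] at hx'
  exact hx.ne hx'

theorem monotoneOn_of_mul_log_inverse : MonotoneOn B (Ici 0) := by
  intro x hx y hy hxy
  have hmono : StrictMonoOn (fun y => y * log y) (Ici 1) :=
    mul_log_strictMonoOn.mono fun z hz => le_trans (by norm_num) (mem_Ici.1 hz)
  refine (hmono.le_iff_le (hB x hx).1 (hB y hy).1).1 ?_
  simpa only [(hB x hx).2, (hB y hy).2] using hxy

end InverseMulLog

/-- Let `B : [0, ∞) → [1, ∞)` be the inverse of `y ↦ y log y` on `[1, ∞)`, i.e. for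
`x ≥ 0`, `B x` is the unique `y ≥ 1` with `y log y = x`. Then the series
`∑_{n=2}^∞ (1/n²) (B(n)² - B(n-1)²)` converges. -/
theorem summable_J2 (B : ℝ → ℝ)
    (hB : ∀ x : ℝ, 0 ≤ x → 1 ≤ B x ∧ B x * Real.log (B x) = x) :
    Summable (fun n : ℕ =>
      (1 / ((n : ℝ) + 2) ^ 2) * ((B ((n : ℝ) + 2)) ^ 2 - (B ((n : ℝ) + 1)) ^ 2)) := by
  have hmono (n : ℕ) : B ((n : ℝ) + 1) ≤ B ((n : ℝ) + 2) :=
    monotoneOn_of_mul_log_inverse hB (mem_Ici.2 (by positivity)) (mem_Ici.2 (by positivity))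
      (by linarith)
  refine summable_of_le_sub_succ (g := fun n : ℕ => 2 / log (B ((n : ℝ) + 1)))
    (fun n => ?_) (fun n => ?_) (fun n => ?_)
  · have hb := (hB ((n : ℝ) + 1) (by positivity)).1
    exact mul_nonneg (by positivity)
      (sub_nonneg.2 (pow_le_pow_left₀ (by linarith) (hmono n) 2))
  · exact div_nonneg zero_le_two (log_nonneg (hB _ (by positivity)).1)
  · have h := sq_sub_sq_div_sq_mul_log_le (one_lt_of_mul_log_inverse hB (by positivity)) (hmono n)
    rw [(hB ((n : ℝ) + 2) (by positivity)).2, ← one_div_mul_eq_div] at h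
    simpa only [Nat.cast_succ, add_assoc, one_add_one_eq_two] using h
end
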